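/- Let k ≥ 2 and let π be a permutation of {1,...,k} with π(1) > π(k). Let a be a positive integer, write n = qa + r with 0 ≤ r < a, and let σ be any permutation of {1,...,n} such that for each block index t (0 ≤ t ≤ q−1), σ maps the index set {ta+1,...,(t+1)a} onto the value set {ta+1,...,(t+1)a}, and σ maps {qa+1,...,n} onto {qa+1,...,n}. Then σ contains at most n·a^(k-1) copies of π. -/
import Mathlib


/-- The number of copies of the `k`-permutation `π` in the `n`-permutation `σ`:
strictly increasing index tuples `x : Fin k → Fin n` such that the entries of
`σ` at these indices are ordered according to `π`. -/
noncomputable def permCopies {k n : ℕ} (π : Equiv.Perm (Fin k))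
    (σ : Equiv.Perm (Fin n)) : ℕ :=
  Nat.card {x : Fin k → Fin n //
    StrictMono x ∧ ∀ i j, π i < π j ↔ σ (x i) < σ (x j)}

/-- Suppose `π(1) > π(k)`, `n = qa + r` with `0 ≤ r < a`, and `σ` is a block
permutation: it maps each of the index blocks `{ta+1,…,(t+1)a}` (for `t < q`)
onto the same block of values, and the final block `{qa+1,…,n}` onto itself
(in 0-indexed form: `σ(i) / a = i / a` for all `i`). Then `σ` contains at most
`n · a^(k-1)` copies of `π`. -/
theorem block_permutation_few_copies (k : ℕ) (hk : 2 ≤ k) (π : Equiv.Perm (Fin k))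
    (hπ : π ⟨k - 1, by omega⟩ < π ⟨0, by omega⟩)
    (n a q r : ℕ) (ha : 0 < a) (hn : n = q * a + r) (hr : r < a)
    (σ : Equiv.Perm (Fin n))
    (hσ : ∀ i : Fin n, ((σ i : Fin n) : ℕ) / a = (i : ℕ) / a) :
    permCopies π σ ≤ n * a ^ (k - 1) := by
  classical
  set i0 : Fin k := ⟨0, by omega⟩ with hi0
  set i1 : Fin k := ⟨k - 1, by omega⟩ with hi1
  have key : ∀ (x : {x : Fin k → Fin n //
      StrictMono x ∧ ∀ i j, π i < π j ↔ σ (x i) < σ (x j)}) (j : Fin k),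
      ((x.1 j : ℕ)) / a = ((x.1 i0 : ℕ)) / a := by
    rintro ⟨x, hmono, hord⟩ j
    show ((x j : ℕ)) / a = ((x i0 : ℕ)) / a
    have h1 : σ (x i1) < σ (x i0) := (hord i1 i0).mp hπ
    have h2 : ((x i1 : ℕ)) / a ≤ ((x i0 : ℕ)) / a := by
      have := Nat.div_le_div_right (c := a) (le_of_lt (Fin.lt_def.mp h1))
      rwa [hσ, hσ] at this
    have h3 : x i0 ≤ x j := hmono.monotone (by simp [hi0, Fin.le_def])
    have h4 : x j ≤ x i1 := hmono.monotone (by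
      simp only [hi1, Fin.le_def]
      omega)
    have h5 := Nat.div_le_div_right (c := a) (Fin.le_def.mp h3)
    have h6 := Nat.div_le_div_right (c := a) (Fin.le_def.mp h4)
    omega
  let f : {x : Fin k → Fin n //
      StrictMono x ∧ ∀ i j, π i < π j ↔ σ (x i) < σ (x j)} →
      Fin n × (Fin (k - 1) → Fin a) := fun x =>
    (x.1 i0, fun i => ⟨((x.1 ⟨i.1 + 1, by omega⟩ : Fin n) : ℕ) % a,
      Nat.mod_lt _ ha⟩)
  have hf : Function.Injective f := by
    rintro x y hxy
    have h0 : x.1 i0 = y.1 i0 := congrArg Prod.fst hxy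
    have h1 : ∀ i : Fin (k - 1),
        ((x.1 ⟨i.1 + 1, by omega⟩ : Fin n) : ℕ) % a =
        ((y.1 ⟨i.1 + 1, by omega⟩ : Fin n) : ℕ) % a := by
      intro i
      have := congrFun (congrArg Prod.snd hxy) i
      exact congrArg Fin.val this
    apply Subtype.ext
    funext j
    apply Fin.ext
    have hdx := key x j
    have hdy := key y j
    have h0' : ((x.1 i0 : ℕ)) = ((y.1 i0 : ℕ)) := congrArg Fin.val h0
    have hmx := Nat.div_add_mod ((x.1 j : ℕ)) a
    have hmy := Nat.div_add_mod ((y.1 j : ℕ)) a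
    by_cases hj : (j : ℕ) = 0
    · have : j = i0 := Fin.ext hj
      rw [this, h0']
    · have hj1 : (j : ℕ) - 1 < k - 1 := by omega
      have hjeq : j = ⟨((⟨(j : ℕ) - 1, hj1⟩ : Fin (k - 1)) : ℕ) + 1, by omega⟩ := by
        apply Fin.ext; simp; omega
      have hmod := h1 ⟨(j : ℕ) - 1, hj1⟩
      rw [← hjeq] at hmod
      rw [← Nat.div_add_mod ((x.1 j : ℕ)) a, ← Nat.div_add_mod ((y.1 j : ℕ)) a,
        hdx, hdy, h0', hmod]
  calc permCopies π σ ≤ Nat.card (Fin n × (Fin (k - 1) → Fin a)) :=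
        Nat.card_le_card_of_injective f hf
    _ = n * a ^ (k - 1) := by
        simp [Nat.card_eq_fintype_card]
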